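/- arXiv:1611.03103 — 3 statements merged into one kernel-verified Lean document; each statement's English description precedes it below -/
import Mathlib

section
/- Let T ⊆ 𝕊^g be a closed matrix convex set and m ∈ ℕ. Then: (i) kz_m(T) is a matrix convex set with kz_m(T)(i) = T(i) for all i ∈ {1,…,m}, and every matrix convex set S with S(i) = T(i) for i ∈ {1,…,m} satisfies kz_m(T) ⊆ S; (ii) if moreover 0 is an interior point of T(1), then pz_m(T) is a matrix convex set with pz_m(T)(i) = T(i) for all i ∈ {1,…,m}, and every matrix convex set S with S(i) = T(i) for i ∈ {1,…,m} satisfies S ⊆ pz_m(T). -/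
open Matrix Kronecker
open scoped ComplexOrder

noncomputable section

abbrev Tuple (g k : ℕ) := Fin g → Matrix (Fin k) (Fin k) ℂ

def IsHermTuple {g k : ℕ} (A : Tuple g k) : Prop := ∀ i, (A i).IsHermitian

abbrev GradedSet (g : ℕ) := (k : ℕ) → Set (Tuple g k)

/-- A graded subset of the free space is matrix convex if it is nonempty and closed under
matrix convex combinations. -/
def MatConvex {g : ℕ} (S : GradedSet g) : Prop :=
  (∃ k, (S k).Nonempty) ∧
  ∀ (r s : ℕ) (k : Fin r → ℕ) (A : (j : Fin r) → Tuple g (k j))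
    (V : (j : Fin r) → Matrix (Fin (k j)) (Fin s) ℂ),
    (∀ j, A j ∈ S (k j)) → (∑ j, (V j)ᴴ * V j) = 1 →
    (fun i => ∑ j, (V j)ᴴ * A j i * V j) ∈ S s

/-- The matrix convex hull: the intersection of all matrix convex sets containing `T`. -/
def mconv {g : ℕ} (T : GradedSet g) : GradedSet g := fun k =>
  {A | ∀ S : GradedSet g, MatConvex S → (∀ m, T m ⊆ S m) → A ∈ S k}

/-- Evaluation of the monic linear pencil `I - ∑ A_i X_i` at the tuple `X`:
`I ⊗ I - ∑ A_i ⊗ X_i`. -/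
def pencilEval {g δ k : ℕ} (A : Tuple g δ) (X : Tuple g k) :
    Matrix (Fin δ × Fin k) (Fin δ × Fin k) ℂ :=
  1 - ∑ i, A i ⊗ₖ X i

/-- The `k`-th level of the free spectrahedron of the monic linear pencil `I - ∑ A_i X_i`. -/
def specLevel {g δ : ℕ} (A : Tuple g δ) (k : ℕ) : Set (Tuple g k) :=
  {X | IsHermTuple X ∧ (pencilEval A X).PosSemidef}

/-- `pz_m(T)`: the graded set whose `k`-th level consists of the hermitian tuples `B` such
that `V* B V ∈ T(r)` for every isometry `V : ℂ^r → ℂ^k` with `r ≤ m`. -/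
def pzSet {g : ℕ} (T : GradedSet g) (m : ℕ) : GradedSet g := fun k =>
  {B | IsHermTuple B ∧ ∀ r : ℕ, r ≤ m → ∀ V : Matrix (Fin k) (Fin r) ℂ,
    Vᴴ * V = 1 → (fun i => Vᴴ * B i * V) ∈ T r}

/-- `kz_m(T) = mconv(T(1) ∪ ... ∪ T(m))`. -/
def kzSet {g : ℕ} (T : GradedSet g) (m : ℕ) : GradedSet g :=
  mconv (fun k => {A | 1 ≤ k ∧ k ≤ m ∧ A ∈ T k})

/-- `0` is an interior point of `T(1)` (inside `𝕊^g(1) ≅ ℝ^g`). -/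
def ZeroInInterior1 {g : ℕ} (T : GradedSet g) : Prop :=
  ∃ ε : ℝ, 0 < ε ∧ ∀ A : Tuple g 1, IsHermTuple A →
    (∀ i, ‖A i 0 0‖ < ε) → A ∈ T 1

/-! The extremal properties of `kz_m(T)` and `pz_m(T)` are formal, and so is the matrix convexity
of `kz_m(T)`. For `pz_m(T)`, a compression `W* (∑ V_j* A_j V_j) W` to a level `r ≤ m` equals
`∑ U_j* A_j U_j` with `U_j = V_j W`. If `r ≤ k_j`, a QR decomposition `U_j = Q_j R_j` with `Q_j`
an isometry replaces `A_j` by its compression `Q_j* A_j Q_j ∈ T(r)`; if `k_j < r`, then `A_j`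
itself lies in `T(k_j)`. Either way the sum becomes a matrix convex combination of points of `T`. -/

theorem Fin.sum_castLE_of_eq_zero {M : Type*} [AddCommMonoid M] {r k : ℕ} (h : r ≤ k)
    {c : Fin k → M} (hc : ∀ i : Fin k, r ≤ (i : ℕ) → c i = 0) :
    ∑ i : Fin r, c (Fin.castLE h i) = ∑ i, c i := by
  calc ∑ i : Fin r, c (Fin.castLE h i) = ∑ i ∈ Finset.univ.map (Fin.castLEEmb h), c i :=
        by rw [Finset.sum_map]; rfl
    _ = ∑ i, c i := by
      refine Finset.sum_subset (Finset.subset_univ _) fun i _ hi => hc i ?_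
      by_contra! hlt
      exact hi (Finset.mem_map.2 ⟨⟨i, hlt⟩, Finset.mem_univ _, rfl⟩)

theorem Matrix.exists_isometry_mul_eq {k r : ℕ} (hr : r ≤ k) (U : Matrix (Fin k) (Fin r) ℂ) :
    ∃ (Q : Matrix (Fin k) (Fin r) ℂ) (R : Matrix (Fin r) (Fin r) ℂ),
      Qᴴ * Q = 1 ∧ Q * R = U := by
  let f : Fin k → EuclideanSpace ℂ (Fin k) := fun i =>
    WithLp.toLp 2 fun a => if h : (i : ℕ) < r then U a ⟨i, h⟩ else 0
  let b := InnerProductSpace.gramSchmidtOrthonormalBasis (𝕜 := ℂ) (by simp) f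
  refine ⟨Matrix.of fun a i => b (Fin.castLE hr i) a,
    Matrix.of fun i j => inner ℂ (b (Fin.castLE hr i)) (f (Fin.castLE hr j)), ?_, ?_⟩
  · ext i j
    simpa [Matrix.mul_apply, Matrix.one_apply, PiLp.inner_apply, mul_comm] using
      orthonormal_iff_ite.mp b.orthonormal (Fin.castLE hr i) (Fin.castLE hr j)
  · ext a j
    have hcol : U a j = f (Fin.castLE hr j) a := by simp [f]
    rw [hcol, ← b.sum_repr' (f (Fin.castLE hr j))]
    simp only [Matrix.mul_apply, Matrix.of_apply, WithLp.ofLp_sum, WithLp.ofLp_smul,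
      Finset.sum_apply, Pi.smul_apply, smul_eq_mul]
    simp_rw [mul_comm ((b _).ofLp a)]
    refine Fin.sum_castLE_of_eq_zero hr
      (c := fun i => inner ℂ (b i) (f (Fin.castLE hr j)) * (b i).ofLp a) fun i hi => ?_
    rw [InnerProductSpace.gramSchmidtOrthonormalBasis_inv_triangular _ _
      (Fin.lt_def.2 (j.isLt.trans_le hi) : Fin.castLE hr j < i), zero_mul]

theorem Matrix.card_le_of_conjTranspose_mul_self_eq_one {k r : ℕ} {V : Matrix (Fin k) (Fin r) ℂ}
    (hV : Vᴴ * V = 1) : r ≤ k := by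
  simpa [hV, Matrix.rank_one] using (Vᴴ.rank_mul_le_right V).trans V.rank_le_height

section MatrixConvex

variable {g : ℕ} {S T : GradedSet g}

namespace MatConvex

theorem mem_zero (hS : MatConvex S) (A : Tuple g 0) : A ∈ S 0 := by
  obtain ⟨k, B, hB⟩ := hS.1
  convert hS.2 1 0 (fun _ => k) (fun _ => B) (fun _ => 0) (fun _ => hB) (Subsingleton.elim _ _)
  exact Subsingleton.elim _ _

theorem conj_mem (hS : MatConvex S) {k s : ℕ} {A : Tuple g k} (hA : A ∈ S k)
    {V : Matrix (Fin k) (Fin s) ℂ} (hV : Vᴴ * V = 1) : (fun i => Vᴴ * A i * V) ∈ S s := by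
  simpa using hS.2 1 s (fun _ => k) (fun _ => A) (fun _ => V) (fun _ => hA) (by simpa using hV)

end MatConvex

theorem matConvex_mconv (T : GradedSet g) : MatConvex (mconv T) :=
  ⟨⟨0, 0, fun _ hS _ => hS.mem_zero _⟩,
    fun r s k A V hA hV S hS hTS => hS.2 r s k A V (fun j => hA j S hS hTS) hV⟩

theorem mconv_subset (hS : MatConvex S) (hTS : ∀ k, T k ⊆ S k) {k : ℕ} : mconv T k ⊆ S k :=
  fun _ hA => hA S hS hTS

section kz

variable {m : ℕ}

theorem kzSet_eq (hT : MatConvex T) {i : ℕ} (hi : 1 ≤ i) (him : i ≤ m) : kzSet T m i = T i :=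
  (mconv_subset hT fun _ _ hA => hA.2.2).antisymm fun _ hA _ _ hTS => hTS i ⟨hi, him, hA⟩

theorem kzSet_subset (hS : MatConvex S) (hST : ∀ i, 1 ≤ i → i ≤ m → S i = T i) {k : ℕ} :
    kzSet T m k ⊆ S k :=
  mconv_subset hS fun n A (hA : 1 ≤ n ∧ n ≤ m ∧ A ∈ T n) =>
    (hST n hA.1 hA.2.1).symm ▸ hA.2.2

end kz

section pz

variable {m : ℕ}

theorem pzSet_eq (hTherm : ∀ k, ∀ A ∈ T k, IsHermTuple A) (hT : MatConvex T) {i : ℕ}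
    (him : i ≤ m) : pzSet T m i = T i := by
  refine Set.Subset.antisymm (fun B hB => ?_) fun B hB =>
    ⟨hTherm i B hB, fun _ _ _ hV => hT.conj_mem hB hV⟩
  simpa using hB.2 i him 1 (by simp)

theorem subset_pzSet (hT : MatConvex T) (hSherm : ∀ k, ∀ A ∈ S k, IsHermTuple A)
    (hS : MatConvex S) (hST : ∀ i, 1 ≤ i → i ≤ m → S i = T i) {k : ℕ} :
    S k ⊆ pzSet T m k := by
  refine fun B hB => ⟨hSherm k B hB, fun r hr V hV => ?_⟩
  rcases Nat.eq_zero_or_pos r with rfl | hr0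
  · exact hT.mem_zero _
  · exact hST r hr0 hr ▸ hS.conj_mem hB hV

theorem exists_mem_conj_eq_of_mem_pzSet {k r : ℕ} (hr : r ≤ m) {A : Tuple g k}
    (hA : A ∈ pzSet T m k) (U : Matrix (Fin k) (Fin r) ℂ) :
    ∃ n, ∃ C ∈ T n, ∃ R : Matrix (Fin n) (Fin r) ℂ,
      Rᴴ * R = Uᴴ * U ∧ ∀ i, Rᴴ * C i * R = Uᴴ * A i * U := by
  rcases le_or_gt r k with hrk | hkr
  · obtain ⟨Q, R, hQ, rfl⟩ := U.exists_isometry_mul_eq hrk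
    refine ⟨r, _, hA.2 r hr Q hQ, R, ?_, fun i => ?_⟩
    · simp [Matrix.conjTranspose_mul, Matrix.mul_assoc, ← Matrix.mul_assoc Qᴴ Q, hQ]
    · simp [Matrix.conjTranspose_mul, Matrix.mul_assoc]
  · exact ⟨k, A, by simpa using hA.2 k (hkr.le.trans hr) 1 (by simp), U, rfl, fun _ => rfl⟩

theorem sum_conj_mem_of_mem_pzSet (hT : MatConvex T) {r : ℕ} (hr : r ≤ m) {ρ : ℕ}
    {k : Fin ρ → ℕ} {A : (j : Fin ρ) → Tuple g (k j)} (hA : ∀ j, A j ∈ pzSet T m (k j))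
    {U : (j : Fin ρ) → Matrix (Fin (k j)) (Fin r) ℂ} (hU : ∑ j, (U j)ᴴ * U j = 1) :
    (fun i => ∑ j, (U j)ᴴ * A j i * U j) ∈ T r := by
  choose n C hC R hRR hRCR using fun j => exists_mem_conj_eq_of_mem_pzSet hr (hA j) (U j)
  simpa only [hRCR] using hT.2 ρ r n C R hC (by simpa only [hRR] using hU)

theorem matConvex_pzSet (hT : MatConvex T) : MatConvex (pzSet T m) := by
  refine ⟨⟨0, 0, fun _ => Matrix.isHermitian_zero, fun r _ V hV => ?_⟩,
    fun ρ s k A V hA hV => ⟨fun i => ?_, fun r hr W hW => ?_⟩⟩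
  · obtain rfl : r = 0 := Nat.le_zero.1 (Matrix.card_le_of_conjTranspose_mul_self_eq_one hV)
    exact hT.mem_zero _
  · exact isSelfAdjoint_sum _ fun j _ =>
      Matrix.isHermitian_conjTranspose_mul_mul (V j) ((hA j).1 i)
  · have hVW : ∑ j, (V j * W)ᴴ * (V j * W) = 1 :=
      calc ∑ j, (V j * W)ᴴ * (V j * W) = Wᴴ * (∑ j, (V j)ᴴ * V j) * W := by
            simp [Matrix.conjTranspose_mul, Matrix.mul_sum, Matrix.sum_mul, Matrix.mul_assoc]
        _ = 1 := by rw [hV, Matrix.mul_one, hW]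
    convert sum_conj_mem_of_mem_pzSet hT hr hA hVW using 2 with i
    simp [Matrix.mul_sum, Matrix.sum_mul, Matrix.mul_assoc, Matrix.conjTranspose_mul]

end pz

end MatrixConvex

theorem kz_smallest_pz_largest_general (g : ℕ) (T : GradedSet g)
    (hTherm : ∀ k, ∀ A ∈ T k, IsHermTuple A)
    (hTconv : MatConvex T) (m : ℕ) :
    (MatConvex (kzSet T m) ∧ (∀ i, 1 ≤ i → i ≤ m → kzSet T m i = T i) ∧
      ∀ S : GradedSet g, (∀ k, ∀ A ∈ S k, IsHermTuple A) → MatConvex S →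
        (∀ i, 1 ≤ i → i ≤ m → S i = T i) → ∀ k, kzSet T m k ⊆ S k) ∧
    (ZeroInInterior1 T →
      MatConvex (pzSet T m) ∧ (∀ i, 1 ≤ i → i ≤ m → pzSet T m i = T i) ∧
      ∀ S : GradedSet g, (∀ k, ∀ A ∈ S k, IsHermTuple A) → MatConvex S →
        (∀ i, 1 ≤ i → i ≤ m → S i = T i) → ∀ k, S k ⊆ pzSet T m k) :=
  ⟨⟨matConvex_mconv _, fun _ hi him => kzSet_eq hTconv hi him,
      fun _ _ hS hST _ => kzSet_subset hS hST⟩,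
    fun _ => ⟨matConvex_pzSet hTconv, fun _ _ him => pzSet_eq hTherm hTconv him,
      fun _ hSherm hS hST _ => subset_pzSet hTconv hSherm hS hST⟩⟩

/-- For a closed matrix convex set `T ⊆ 𝕊^g`: `kz_m(T)` is the smallest matrix convex set
agreeing with `T` on levels `1,…,m`, and (if `0` is an interior point of `T(1)`) `pz_m(T)`
is the largest such matrix convex set. -/
theorem kz_smallest_pz_largest (g : ℕ) (T : GradedSet g)
    (hTherm : ∀ k, ∀ A ∈ T k, IsHermTuple A)
    (hTclosed : ∀ k, IsClosed (T k)) (hTconv : MatConvex T) (m : ℕ) :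
    (MatConvex (kzSet T m) ∧ (∀ i, 1 ≤ i → i ≤ m → kzSet T m i = T i) ∧
      ∀ S : GradedSet g, (∀ k, ∀ A ∈ S k, IsHermTuple A) → MatConvex S →
        (∀ i, 1 ≤ i → i ≤ m → S i = T i) → ∀ k, kzSet T m k ⊆ S k) ∧
    (ZeroInInterior1 T →
      MatConvex (pzSet T m) ∧ (∀ i, 1 ≤ i → i ≤ m → pzSet T m i = T i) ∧
      ∀ S : GradedSet g, (∀ k, ∀ A ∈ S k, IsHermTuple A) → MatConvex S →
        (∀ i, 1 ≤ i → i ≤ m → S i = T i) → ∀ k, S k ⊆ pzSet T m k) :=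
  kz_smallest_pz_largest_general g T hTherm hTconv m
end
end

section
/- Let L = I_δ − Σ_{i=1}^g A_i X_i be a monic linear pencil of size δ that is Z-irreducible and Z-minimal. Then the unital star-subalgebra of the algebra of δ×δ complex matrices generated by A_1,…,A_g is the full matrix algebra ℂ^{δ×δ}. -/
open Matrix Kronecker
open scoped ComplexOrder

noncomputable section

/-- The free locus of the monic linear pencil `I - ∑ A_i X_i`:
`Z(L) = {X ∈ 𝕊^g | ker L(X) ≠ {0}}`. -/
def freeLocus {g δ : ℕ} (A : Tuple g δ) : GradedSet g := fun k =>
  {X | IsHermTuple X ∧ ∃ v, v ≠ 0 ∧ (pencilEval A X).mulVec v = 0}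

/-- A monic linear pencil is `Z`-irreducible if whenever its free locus is a union of two
free loci of monic pencils, it equals one of them. -/
def ZIrr {g δ : ℕ} (A : Tuple g δ) : Prop :=
  ∀ (d₁ d₂ : ℕ) (H₁ : Tuple g d₁) (H₂ : Tuple g d₂), IsHermTuple H₁ → IsHermTuple H₂ →
    (∀ k, freeLocus H₁ k ∪ freeLocus H₂ k = freeLocus A k) →
    (∀ k, freeLocus A k = freeLocus H₁ k) ∨ (∀ k, freeLocus A k = freeLocus H₂ k)

/-- A monic linear pencil is `Z`-minimal if no monic pencil of smaller size has the same
free locus. -/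
def ZMin {g δ : ℕ} (A : Tuple g δ) : Prop :=
  ¬∃ d : ℕ, d < δ ∧ ∃ H : Tuple g d, IsHermTuple H ∧ ∀ k, freeLocus H k = freeLocus A k

/-! If the `A i` generated a proper unital ⋆-subalgebra, Burnside's theorem (Schur's lemma plus
the Jacobson density theorem) would give a nontrivial common invariant subspace `W`. As the `A i`
are hermitian, the pencil is block diagonal, `L ≅ L₁ ⊕ L₂`, in an orthonormal basis adapted to
`W ⊕ Wᗮ`. Then `det L(X) = det L₁(X) · det L₂(X)`, i.e. `Z(L) = Z(L₁) ∪ Z(L₂)`, and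
`Z`-irreducibility forces `Z(L) = Z(Lᵢ)` for a pencil `Lᵢ` of smaller size, contradicting
`Z`-minimality. -/

section Burnside

variable {K V : Type*} [Field K] [IsAlgClosed K] [AddCommGroup V] [Module K V]
  [FiniteDimensional K V]

theorem Subalgebra.exists_eq_smul_of_isSimpleModule (S : Subalgebra K (Module.End K V))
    [IsSimpleModule S V] (g : Module.End S V) : ∃ μ : K, ∀ v, g v = μ • v := by
  have := IsSimpleModule.nontrivial S V
  obtain ⟨μ, hμ⟩ := Module.End.exists_eigenvalue (g.restrictScalars K)
  obtain ⟨v, hv⟩ := hμ.exists_hasEigenvector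
  refine ⟨μ, fun w => ?_⟩
  have : g - algebraMap K (Module.End S V) μ = 0 := by
    refine (LinearMap.bijective_or_eq_zero _).resolve_left fun hbij => hv.2 (hbij.1 ?_)
    simpa using sub_eq_zero.mpr hv.apply_eq_smul
  simpa [sub_eq_zero] using LinearMap.congr_fun this w

theorem Subalgebra.eq_top_of_isSimpleModule (S : Subalgebra K (Module.End K V))
    [IsSimpleModule S V] : S = ⊤ := by
  classical
  refine eq_top_iff.mpr fun f _ => ?_
  -- By Schur's lemma `f` commutes with `Module.End S V`, so Jacobson density applies to it.
  let F : Module.End (Module.End S V) V :=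
    { toFun := f
      map_add' := f.map_add
      map_smul' := fun g v => by
        obtain ⟨μ, hμ⟩ := S.exists_eq_smul_of_isSimpleModule g
        simp [Module.End.smul_def, hμ] }
  let b := Module.finBasis K V
  obtain ⟨r, hr⟩ := jacobson_density F (Finset.univ.image b)
  have : f = r := b.ext fun i => hr _ (Finset.mem_image_of_mem _ (Finset.mem_univ i))
  exact this ▸ r.2

end Burnside

theorem Matrix.adjoin_eq_top_of_invariant_eq_bot_or_top {K n : Type*} [Field K] [IsAlgClosed K]
    [Fintype n] [DecidableEq n] (s : Set (Matrix n n K))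
    (h : ∀ W : Submodule K (n → K), (∀ M ∈ s, ∀ x ∈ W, M *ᵥ x ∈ W) → W = ⊥ ∨ W = ⊤) :
    Algebra.adjoin K s = ⊤ := by
  rcases isEmpty_or_nonempty n with _ | _
  · exact Subsingleton.elim _ _
  set S := (Algebra.adjoin K s).map (toLinAlgEquiv' : Matrix n n K ≃ₐ[K] _).toAlgHom
  have : IsSimpleModule S (n → K) := by
    refine (isSimpleModule_iff _ _).mpr ⟨fun N => ?_⟩
    have hinv : ∀ M ∈ s, ∀ x ∈ N.restrictScalars K, M *ᵥ x ∈ N.restrictScalars K :=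
      fun M hM x hx => N.smul_mem ⟨toLin' M, M, Algebra.subset_adjoin hM, rfl⟩ hx
    simpa only [Submodule.restrictScalars_eq_bot_iff, Submodule.restrictScalars_eq_top_iff]
      using h _ hinv
  refine eq_top_iff.mpr fun M _ => ?_
  obtain ⟨N, hN, hNM⟩ := S.eq_top_of_isSimpleModule.ge (Algebra.mem_top (x := toLin' M))
  exact toLin'.injective hNM ▸ hN

lemma Matrix.det_conjTranspose_mul_mul_of_equiv {m n R : Type*} [Fintype m] [Fintype n]
    [DecidableEq m] [DecidableEq n] [CommRing R] [StarRing R] (σ : n ≃ m) {U : Matrix m n R}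
    (hU : Uᴴ * U = 1) (M : Matrix m m R) : (Uᴴ * M * U).det = M.det := by
  set V := U.submatrix id σ.symm
  have hUV : Uᴴ * M * U = (Vᴴ * M * V).submatrix σ σ := by
    ext p q
    simp [V, mul_apply]
  have hV : Vᴴ * V = 1 := by
    rw [conjTranspose_submatrix, ← submatrix_mul _ _ _ _ _ Function.bijective_id, hU,
      submatrix_one_equiv]
  rw [hUV, det_submatrix_equiv_self, det_mul, det_mul, mul_comm, ← mul_assoc, mul_comm _ Vᴴ.det,
    ← det_mul, hV, det_one, one_mul]

lemma mem_freeLocus_iff {g δ k : ℕ} (A : Tuple g δ) (X : Tuple g k) :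
    X ∈ freeLocus A k ↔ IsHermTuple X ∧ (pencilEval A X).det = 0 :=
  and_congr_right fun _ => exists_mulVec_eq_zero_iff

lemma conjTranspose_kronecker_one_mul_pencilEval_mul {g δ k : ℕ} {ι : Type*} [Fintype ι]
    [DecidableEq ι] (A : Tuple g δ) (X : Tuple g k) {U : Matrix (Fin δ) ι ℂ} (hU : Uᴴ * U = 1) :
    (U ⊗ₖ (1 : Matrix (Fin k) (Fin k) ℂ))ᴴ * pencilEval A X *
        (U ⊗ₖ (1 : Matrix (Fin k) (Fin k) ℂ)) =
      1 - ∑ i, (Uᴴ * A i * U) ⊗ₖ X i := by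
  rw [pencilEval, Matrix.mul_sub, Matrix.sub_mul, Matrix.mul_sum, Matrix.sum_mul, Matrix.mul_one]
  simp only [conjTranspose_kronecker, conjTranspose_one, ← mul_kronecker_mul, Matrix.one_mul,
    Matrix.mul_one, hU, one_kronecker_one]

lemma submatrix_sumProdDistrib_one_sub_sum_fromBlocks_kronecker {g d e k : ℕ} (H₁ : Tuple g d)
    (H₂ : Tuple g e) (X : Tuple g k) :
    (1 - ∑ i, fromBlocks (H₁ i) 0 0 (H₂ i) ⊗ₖ X i).submatrix
        (Equiv.sumProdDistrib _ _ _).symm (Equiv.sumProdDistrib _ _ _).symm =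
      fromBlocks (pencilEval H₁ X) 0 0 (pencilEval H₂ X) := by
  ext (⟨j, t⟩ | ⟨j, t⟩) (⟨j', t'⟩ | ⟨j', t'⟩) <;>
    simp [pencilEval, Matrix.sum_apply, one_apply]

theorem det_pencilEval_eq_mul_of_conj_eq_fromBlocks {g δ d e k : ℕ} (A : Tuple g δ)
    (H₁ : Tuple g d) (H₂ : Tuple g e) (σ : Fin d ⊕ Fin e ≃ Fin δ)
    {U : Matrix (Fin δ) (Fin d ⊕ Fin e) ℂ} (hU : Uᴴ * U = 1)
    (hAU : ∀ i, Uᴴ * A i * U = fromBlocks (H₁ i) 0 0 (H₂ i)) (X : Tuple g k) :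
    (pencilEval A X).det = (pencilEval H₁ X).det * (pencilEval H₂ X).det := by
  have hUk :
      (U ⊗ₖ (1 : Matrix (Fin k) (Fin k) ℂ))ᴴ * (U ⊗ₖ (1 : Matrix (Fin k) (Fin k) ℂ)) = 1 := by
    rw [conjTranspose_kronecker, conjTranspose_one, ← mul_kronecker_mul, hU, Matrix.one_mul,
      one_kronecker_one]
  rw [← det_conjTranspose_mul_mul_of_equiv (σ.prodCongr (Equiv.refl _)) hUk,
    conjTranspose_kronecker_one_mul_pencilEval_mul A X hU,
    ← det_submatrix_equiv_self (Equiv.sumProdDistrib _ _ _).symm]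
  simp only [hAU, submatrix_sumProdDistrib_one_sub_sum_fromBlocks_kronecker, det_fromBlocks_zero₂₁]

theorem freeLocus_eq_union_of_conj_eq_fromBlocks {g δ d e : ℕ} (A : Tuple g δ)
    (H₁ : Tuple g d) (H₂ : Tuple g e) (σ : Fin d ⊕ Fin e ≃ Fin δ)
    {U : Matrix (Fin δ) (Fin d ⊕ Fin e) ℂ} (hU : Uᴴ * U = 1)
    (hAU : ∀ i, Uᴴ * A i * U = fromBlocks (H₁ i) 0 0 (H₂ i)) (k : ℕ) :
    freeLocus H₁ k ∪ freeLocus H₂ k = freeLocus A k := by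
  ext X
  simp only [Set.mem_union, mem_freeLocus_iff,
    det_pencilEval_eq_mul_of_conj_eq_fromBlocks A H₁ H₂ σ hU hAU, mul_eq_zero, and_or_left]

lemma conjTranspose_mul_mul_apply_eq_inner {𝕜 ι n : Type*} [RCLike 𝕜] [Fintype ι] [Fintype n]
    [DecidableEq n] (b : ι → EuclideanSpace 𝕜 n) (M : Matrix n n 𝕜) (p q : ι) :
    ((of fun a p => b p a)ᴴ * M * of fun a p => b p a) p q =
      inner 𝕜 (b p) (toEuclideanLin M (b q)) := by
  simp only [mul_apply, conjTranspose_apply, of_apply, EuclideanSpace.inner_eq_star_dotProduct,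
    toLpLin_apply, dotProduct, mulVec, Finset.sum_mul, Pi.star_apply]
  rw [Finset.sum_comm]
  exact Finset.sum_congr rfl fun _ _ => Finset.sum_congr rfl fun _ _ => by ring

theorem exists_conj_eq_fromBlocks_of_invariant {g δ : ℕ} (A : Tuple g δ) (hA : IsHermTuple A)
    (W : Submodule ℂ (EuclideanSpace ℂ (Fin δ)))
    (hW : ∀ i, ∀ x ∈ W, toEuclideanLin (A i) x ∈ W) :
    ∃ (H₁ : Tuple g (Module.finrank ℂ W)) (H₂ : Tuple g (Module.finrank ℂ Wᗮ))
      (U : Matrix (Fin δ) (Fin (Module.finrank ℂ W) ⊕ Fin (Module.finrank ℂ Wᗮ)) ℂ),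
      IsHermTuple H₁ ∧ IsHermTuple H₂ ∧ Uᴴ * U = 1 ∧
        ∀ i, Uᴴ * A i * U = fromBlocks (H₁ i) 0 0 (H₂ i) := by
  set b := ((stdOrthonormalBasis ℂ W).prod (stdOrthonormalBasis ℂ Wᗮ)).map
    W.orthogonalDecomposition.symm
  have hb₁ : ∀ j, b (.inl j) ∈ W := fun j => by simp [b]
  have hb₂ : ∀ j, b (.inr j) ∈ Wᗮ := fun j => by simp [b]
  set U : Matrix (Fin δ) _ ℂ := of fun a p => b p a
  have hU : Uᴴ * U = 1 := by
    ext p q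
    rw [← Matrix.mul_one Uᴴ, conjTranspose_mul_mul_apply_eq_inner, toLpLin_one]
    exact orthonormal_iff_ite.mp b.orthonormal p q
  set B := fun i => Uᴴ * A i * U
  have hB₂₁ : ∀ i, (B i).toBlocks₂₁ = 0 := fun i => by
    ext j j'
    exact (conjTranspose_mul_mul_apply_eq_inner b (A i) _ _).trans
      ((W.mem_orthogonal' _).mp (hb₂ j) _ (hW i _ (hb₁ j')))
  have hB : ∀ i, (B i).toBlocks₁₁.IsHermitian ∧ (B i).toBlocks₁₂ᴴ = (B i).toBlocks₂₁ ∧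
      (B i).toBlocks₂₁ᴴ = (B i).toBlocks₁₂ ∧ (B i).toBlocks₂₂.IsHermitian := fun i => by
    rw [← isHermitian_fromBlocks_iff, fromBlocks_toBlocks]
    exact isHermitian_conjTranspose_mul_mul U (hA i)
  refine ⟨fun i => (B i).toBlocks₁₁, fun i => (B i).toBlocks₂₂, U, fun i => (hB i).1,
    fun i => (hB i).2.2.2, hU, fun i => ?_⟩
  have hB₁₂ : (B i).toBlocks₁₂ = 0 := by
    rw [← (hB i).2.2.1, hB₂₁, conjTranspose_zero]
  change B i = _
  rw [← fromBlocks_toBlocks (B i), hB₁₂, hB₂₁]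

theorem exists_freeLocus_eq_union_of_invariant {g δ : ℕ} (A : Tuple g δ) (hA : IsHermTuple A)
    (W : Submodule ℂ (Fin δ → ℂ)) (hW : ∀ i, ∀ x ∈ W, A i *ᵥ x ∈ W) (hbot : W ≠ ⊥)
    (htop : W ≠ ⊤) :
    ∃ (d e : ℕ) (H₁ : Tuple g d) (H₂ : Tuple g e), d < δ ∧ e < δ ∧
      IsHermTuple H₁ ∧ IsHermTuple H₂ ∧ ∀ k, freeLocus H₁ k ∪ freeLocus H₂ k = freeLocus A k := by
  set W' : Submodule ℂ (EuclideanSpace ℂ (Fin δ)) :=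
    W.map ((WithLp.linearEquiv 2 ℂ (Fin δ → ℂ)).symm : (Fin δ → ℂ) →ₗ[ℂ] _)
  have hW' : ∀ i, ∀ x ∈ W', toEuclideanLin (A i) x ∈ W' := fun i x hx => by
    rw [Submodule.mem_map_equiv] at hx ⊢
    exact hW i _ hx
  obtain ⟨H₁, H₂, U, hH₁, hH₂, hU, hAU⟩ := exists_conj_eq_fromBlocks_of_invariant A hA W' hW'
  have hrank : Module.finrank ℂ W' = Module.finrank ℂ W := LinearEquiv.finrank_map_eq _ _
  have hsum : Module.finrank ℂ W' + Module.finrank ℂ W'ᗮ = δ := by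
    rw [W'.finrank_add_finrank_orthogonal, finrank_euclideanSpace_fin]
  have hpos : 0 < Module.finrank ℂ W := Submodule.one_le_finrank_iff.mpr hbot
  have hlt : Module.finrank ℂ W < δ := by simpa using Submodule.finrank_lt htop
  exact ⟨_, _, H₁, H₂, by omega, by omega, hH₁, hH₂,
    freeLocus_eq_union_of_conj_eq_fromBlocks A H₁ H₂ (finSumFinEquiv.trans (finCongr hsum)) hU hAU⟩

/-- If a monic linear pencil `L = I - ∑ A_i X_i` of size `δ` is `Z`-irreducible and
`Z`-minimal, then the unital star-subalgebra of `ℂ^{δ×δ}` generated by `A_1, …, A_g` is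
the full matrix algebra. -/
theorem star_algebra_of_Zirr_Zmin (g δ : ℕ) (A : Tuple g δ) (hA : IsHermTuple A)
    (hirr : ZIrr A) (hmin : ZMin A) :
    StarAlgebra.adjoin ℂ (Set.range A) =
      (⊤ : StarSubalgebra ℂ (Matrix (Fin δ) (Fin δ) ℂ)) := by
  by_contra hne
  have hred : ¬∀ W : Submodule ℂ (Fin δ → ℂ),
      (∀ M ∈ Set.range A, ∀ x ∈ W, M *ᵥ x ∈ W) → W = ⊥ ∨ W = ⊤ := fun h => by
    refine hne (StarSubalgebra.toSubalgebra_eq_top.mp (eq_top_iff.mpr ?_))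
    rw [StarAlgebra.adjoin_toSubalgebra, ← Matrix.adjoin_eq_top_of_invariant_eq_bot_or_top _ h]
    exact Algebra.adjoin_mono Set.subset_union_left
  push Not at hred
  obtain ⟨W, hW, hbot, htop⟩ := hred
  obtain ⟨d, e, H₁, H₂, hd, he, hH₁, hH₂, hsplit⟩ :=
    exists_freeLocus_eq_union_of_invariant A hA W (fun i => hW _ ⟨i, rfl⟩) hbot htop
  rcases hirr d e H₁ H₂ hH₁ hH₂ hsplit with h | h
  · exact hmin ⟨d, hd, H₁, hH₁, fun k => (h k).symm⟩
  · exact hmin ⟨e, he, H₂, hH₂, fun k => (h k).symm⟩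
end
end

section
/- Let A = (A_1,…,A_g) be a g-tuple of δ×δ hermitian complex matrices and k ∈ ℕ. Let p be the determinant of the (δk)×(δk) matrix I − Σ_{i=1}^g A_i ⊗ 𝒴^i over the multivariate polynomial ring ℂ[𝒴^i_{αβ} : 1 ≤ i ≤ g, 1 ≤ α,β ≤ k], where 𝒴^i is the k×k matrix of commuting variables (𝒴^i_{αβ})_{α,β} and ⊗ is the Kronecker product. Then the total degree of p equals the maximum over all tuples B ∈ (ℂ^{k×k})^g of the rank of the (δk)×(δk) matrix Σ_{i=1}^g A_i ⊗ B_i. -/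
open Matrix Kronecker MvPolynomial ComplexStarModule

/-!
Restricting `p = det (1 - ∑ Aᵢ ⊗ 𝒴ⁱ)` to the line `t ↦ t • B` gives the reversed
characteristic polynomial `det (1 - t M_B)` of `M_B = ∑ Aᵢ ⊗ Bᵢ`; its degree is at most `deg p`,
and its `t^d`-coefficient is the degree-`d` homogeneous component of `p` evaluated at `B`. When
every `Bᵢ` is hermitian, so is `M_B`, and then `det (1 - t M_B)` has degree exactly `rank M_B`.

Hermitian tuples are Zariski dense: `B = ℜ B + i ℑ B`, so a polynomial that does not vanish at
`B` does not vanish on the complex line `ℜ B + t ℑ B`, hence at some real `t`, where the tuple is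
hermitian. Applied to the top homogeneous component of `p` this gives a hermitian `B` with
`rank M_B = deg p`. Conversely, if `P M_B Q = 1` with `P, Q` of size `rank M_B`, the polynomial
`det (P (∑ Aᵢ ⊗ 𝒴ⁱ) Q)` does not vanish at `B`, hence at some hermitian `B'`, and then
`rank M_B ≤ rank M_B' = deg (det (1 - t M_B')) ≤ deg p`.
-/

noncomputable section

namespace MvPolynomial

variable {R σ : Type*} [CommRing R]

def lineEval (y x : σ → R) : MvPolynomial σ R →ₐ[R] Polynomial R :=
  aeval fun v => Polynomial.C (y v) + Polynomial.C (x v) * Polynomial.X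

theorem eval_lineEval (y x : σ → R) (p : MvPolynomial σ R) (t : R) :
    (lineEval y x p).eval t = eval (y + t • x) p := by
  have : (Polynomial.evalRingHom t).comp (lineEval y x : MvPolynomial σ R →+* Polynomial R) =
      eval (y + t • x) := by
    ext <;> simp [lineEval, mul_comm t]
  exact DFunLike.congr_fun this p

theorem lineEval_zero_monomial (x : σ → R) (m : σ →₀ ℕ) (a : R) :
    lineEval 0 x (monomial m a) =
      Polynomial.C (eval x (monomial m a)) * Polynomial.X ^ m.degree := by
  simp only [lineEval, aeval_monomial, Pi.zero_apply, map_zero, zero_add, mul_pow,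
    Finsupp.prod, Finset.prod_mul_distrib, Finset.prod_pow_eq_pow_sum, eval_monomial, map_mul,
    map_prod, map_pow, Finsupp.degree_apply, Polynomial.algebraMap_eq]
  ring

theorem coeff_lineEval_zero (x : σ → R) (p : MvPolynomial σ R) (d : ℕ) :
    (lineEval 0 x p).coeff d = eval x (homogeneousComponent d p) := by
  induction p using MvPolynomial.induction_on' with
  | monomial m a =>
    rw [lineEval_zero_monomial, Polynomial.coeff_C_mul_X_pow,
      homogeneousComponent_of_mem (isHomogeneous_monomial a rfl)]
    split_ifs <;> simp
  | add p q hp hq => rw [map_add, Polynomial.coeff_add, hp, hq, map_add, map_add]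

theorem natDegree_lineEval_zero_le (x : σ → R) (p : MvPolynomial σ R) :
    (lineEval 0 x p).natDegree ≤ p.totalDegree :=
  Polynomial.natDegree_le_iff_coeff_eq_zero.2 fun d hd => by
    rw [coeff_lineEval_zero, homogeneousComponent_eq_zero _ _ (by exact_mod_cast hd), map_zero]

theorem homogeneousComponent_totalDegree_ne_zero {R : Type*} [CommSemiring R]
    {p : MvPolynomial σ R} (hp : p ≠ 0) : homogeneousComponent p.totalDegree p ≠ 0 := by
  obtain ⟨m, hm, hdeg⟩ := Finset.exists_mem_eq_sup p.support (support_nonempty.2 hp)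
    fun m => m.sum fun _ e => e
  have hdeg' : m.degree = p.totalDegree := hdeg.symm
  refine ne_of_apply_ne (coeff m) ?_
  rw [coeff_homogeneousComponent, if_pos hdeg', coeff_zero]
  exact mem_support_iff.1 hm

theorem exists_eval_ne_zero {R : Type*} [CommRing R] [IsDomain R] [Infinite R]
    {p : MvPolynomial σ R} (hp : p ≠ 0) : ∃ x, eval x p ≠ 0 := by
  by_contra! h
  exact hp (funext fun x => by simp [h])

end MvPolynomial

theorem Polynomial.exists_ofReal_eval_ne_zero {f : Polynomial ℂ} (hf : f ≠ 0) :
    ∃ t : ℝ, f.eval (t : ℂ) ≠ 0 := by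
  by_contra! h
  exact hf (f.eq_zero_of_infinite_isRoot ((Set.infinite_range_of_injective
    Complex.ofReal_injective).mono (Set.range_subset_iff.2 h)))

namespace Matrix

section Field

variable {m n K : Type*} [Field K]

theorem exists_mul_mul_eq_one [Fintype m] [DecidableEq m] (M : Matrix m m K) :
    ∃ (P : Matrix (Fin M.rank) m K) (Q : Matrix m (Fin M.rank) K), P * M * Q = 1 := by
  obtain ⟨V, U, e, -, -, hVMU⟩ := M.exists_rank_normal_form
  let ι : Fin M.rank → m := fun j => e.symm (Sum.inl j)
  refine ⟨V.submatrix ι id, U.submatrix id ι, ?_⟩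
  have hPQ : V.submatrix ι id * M * U.submatrix id ι = (V * M * U).submatrix ι ι := by
    rw [submatrix_mul _ _ _ _ _ Function.bijective_id,
      submatrix_mul _ _ _ _ _ Function.bijective_id, submatrix_id_id]
  rw [hPQ, hVMU]
  ext i j
  simp [ι, one_apply]

theorem le_rank_of_det_mul_mul_ne_zero [Fintype m] [Fintype n] {r : ℕ} {P : Matrix (Fin r) m K}
    {M : Matrix m n K} {Q : Matrix n (Fin r) K} (h : (P * M * Q).det ≠ 0) : r ≤ M.rank :=
  calc r = (P * M * Q).rank := by rw [rank_of_det_ne_zero h, Fintype.card_fin]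
    _ ≤ (M * Q).rank := by rw [Matrix.mul_assoc]; exact rank_mul_le_right _ _
    _ ≤ M.rank := rank_mul_le_left _ _

end Field

theorem IsHermitian.natDegree_charpolyRev {n 𝕜 : Type*} [Fintype n] [DecidableEq n] [RCLike 𝕜]
    {A : Matrix n n 𝕜} (hA : A.IsHermitian) : A.charpolyRev.natDegree = A.rank := by
  rw [← reverse_charpoly, Polynomial.reverse_natDegree, charpoly_natDegree_eq_dim,
    ← Polynomial.rootMultiplicity_eq_natTrailingDegree', ← Polynomial.count_roots,
    hA.roots_charpoly_eq_eigenvalues, Multiset.count_map, hA.rank_eq_card_non_zero_eigs]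
  simp_rw [ne_eq, Fintype.card_subtype_compl, Fintype.card_subtype, Function.comp_apply,
    eq_comm (a := (0 : 𝕜)), RCLike.ofReal_eq_zero]
  rfl

theorem isHermitian_sum_kronecker {ι m n R : Type*} [Fintype ι] [CommRing R] [StarRing R]
    {A : ι → Matrix m m R} {B : ι → Matrix n n R} (hA : ∀ i, (A i).IsHermitian)
    (hB : ∀ i, (B i).IsHermitian) : (∑ i, A i ⊗ₖ B i).IsHermitian :=
  isSelfAdjoint_sum _ fun i _ => (conjTranspose_kronecker _ _).trans (by rw [hA i, hB i])

variable {ι m n R : Type*}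

def entries (B : ι → Matrix n n R) : ι × n × n → R := fun v => B v.1 v.2.1 v.2.2

theorem exists_isHermitian_eval_entries_ne_zero (q : MvPolynomial (ι × n × n) ℂ)
    (B : ι → Matrix n n ℂ) (hB : eval (entries B) q ≠ 0) :
    ∃ B' : ι → Matrix n n ℂ, (∀ i, (B' i).IsHermitian) ∧ eval (entries B') q ≠ 0 := by
  let H : ι → Matrix n n ℂ := ℜ B
  let K : ι → Matrix n n ℂ := ℑ B
  have hI : (lineEval (entries H) (entries K) q).eval Complex.I ≠ 0 := by
    rw [← realPart_add_I_smul_imaginaryPart B] at hB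
    rwa [eval_lineEval]
  obtain ⟨t, ht⟩ := Polynomial.exists_ofReal_eval_ne_zero
    (f := lineEval (entries H) (entries K) q) fun h => hI (by rw [h, Polynomial.eval_zero])
  refine ⟨(ℜ B + t • ℑ B : selfAdjoint _), fun i => (ℜ B + t • ℑ B : selfAdjoint _).prop.apply i,
    ?_⟩
  rwa [eval_lineEval] at ht

theorem exists_isHermitian_natDegree_lineEval_eq_totalDegree {p : MvPolynomial (ι × n × n) ℂ}
    (hp : p ≠ 0) : ∃ B : ι → Matrix n n ℂ, (∀ i, (B i).IsHermitian) ∧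
      (lineEval 0 (entries B) p).natDegree = p.totalDegree := by
  obtain ⟨x, hx⟩ := exists_eval_ne_zero (homogeneousComponent_totalDegree_ne_zero hp)
  obtain ⟨B, hB, hBx⟩ := exists_isHermitian_eval_entries_ne_zero _ (fun i α β => x (i, α, β)) hx
  refine ⟨B, hB, le_antisymm (natDegree_lineEval_zero_le _ _) ?_⟩
  exact Polynomial.le_natDegree_of_ne_zero (by rwa [coeff_lineEval_zero])

variable [Fintype ι] [CommRing R]

variable (n) in
def genericPencil (A : ι → Matrix m m R) :
    Matrix (m × n) (m × n) (MvPolynomial (ι × n × n) R) :=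
  ∑ i, (A i).map C ⊗ₖ Matrix.of fun α β => X (i, α, β)

theorem map_eval_genericPencil (A : ι → Matrix m m R) (B : ι → Matrix n n R) :
    (genericPencil n A).map (eval (entries B)) = ∑ i, A i ⊗ₖ B i := by
  ext
  simp [genericPencil, entries, sum_apply]

theorem map_lineEval_genericPencil (A : ι → Matrix m m R) (B : ι → Matrix n n R) :
    (genericPencil n A).map (lineEval 0 (entries B)) =
      (Polynomial.X : Polynomial R) • (∑ i, A i ⊗ₖ B i).map Polynomial.C := by
  ext i j : 1
  simp only [genericPencil, entries, lineEval]
  simp [sum_apply, Finset.mul_sum]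
  exact Finset.sum_congr rfl fun _ _ => by ring

variable [Fintype m] [Fintype n]

theorem eval_det_mul_genericPencil_mul {r : Type*} [Fintype r] [DecidableEq r]
    (A : ι → Matrix m m R) (B : ι → Matrix n n R) (P : Matrix r (m × n) R)
    (Q : Matrix (m × n) r R) :
    eval (entries B) (det (P.map (C (σ := ι × n × n)) * genericPencil n A *
      Q.map (C (σ := ι × n × n)))) = det (P * (∑ i, A i ⊗ₖ B i) * Q) := by
  rw [RingHom.map_det, RingHom.mapMatrix_apply, Matrix.map_mul, Matrix.map_mul,
    map_eval_genericPencil]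
  simp [Matrix.map_map, Function.comp_def]

theorem lineEval_det_one_sub_genericPencil [DecidableEq m] [DecidableEq n]
    (A : ι → Matrix m m R) (B : ι → Matrix n n R) :
    lineEval 0 (entries B) (det (1 - genericPencil n A)) = (∑ i, A i ⊗ₖ B i).charpolyRev := by
  rw [AlgHom.map_det, AlgHom.mapMatrix_apply, Matrix.map_sub _ (map_sub _),
    Matrix.map_one _ (map_zero _) (map_one _), map_lineEval_genericPencil, charpolyRev]

variable (n) in
theorem det_one_sub_genericPencil_ne_zero [DecidableEq m] [DecidableEq n] [Nontrivial R]
    (A : ι → Matrix m m R) : det (1 - genericPencil n A) ≠ 0 := fun h => by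
  have h0 := congrArg (Polynomial.eval 0)
    (lineEval_det_one_sub_genericPencil A (0 : ι → Matrix n n R))
  rw [h, map_zero, Polynomial.eval_zero, eval_charpolyRev] at h0
  exact zero_ne_one h0

end Matrix

end

/-- The total degree of `det(I - ∑ A_i ⊗ 𝒴^i)`, as a polynomial in the `g k²` commuting
entry variables of the generic `k × k` matrices `𝒴^i`, equals the maximal rank of
`∑ A_i ⊗ B_i` over all tuples `B` of `k × k` complex matrices. -/
theorem totalDegree_det_pencil_eq_max_rank (g δ k : ℕ)
    (A : Fin g → Matrix (Fin δ) (Fin δ) ℂ) (hA : ∀ i, (A i).IsHermitian) :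
    IsGreatest
      {r : ℕ | ∃ B : Fin g → Matrix (Fin k) (Fin k) ℂ, r = (∑ i, A i ⊗ₖ B i).rank}
      (Matrix.det
        ((1 : Matrix (Fin δ × Fin k) (Fin δ × Fin k)
            (MvPolynomial (Fin g × Fin k × Fin k) ℂ)) -
          ∑ i, ((A i).map MvPolynomial.C ⊗ₖ
            Matrix.of fun α β => MvPolynomial.X (i, α, β)))).totalDegree := by
  change IsGreatest _ (det (1 - genericPencil (Fin k) A)).totalDegree
  set p := det (1 - genericPencil (Fin k) A)
  have hrank : ∀ B : Fin g → Matrix (Fin k) (Fin k) ℂ, (∀ i, (B i).IsHermitian) →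
      (∑ i, A i ⊗ₖ B i).rank = (lineEval 0 (entries B) p).natDegree := fun B hB => by
    rw [lineEval_det_one_sub_genericPencil,
      (isHermitian_sum_kronecker hA hB).natDegree_charpolyRev]
  refine ⟨?_, ?_⟩
  · obtain ⟨B, hB, hdeg⟩ :=
      exists_isHermitian_natDegree_lineEval_eq_totalDegree
        (det_one_sub_genericPencil_ne_zero (Fin k) A)
    exact ⟨B, by rw [hrank B hB, hdeg]⟩
  · rintro _ ⟨B, rfl⟩
    obtain ⟨P, Q, hPQ⟩ := exists_mul_mul_eq_one (∑ i, A i ⊗ₖ B i)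
    obtain ⟨B', hB', hne⟩ := exists_isHermitian_eval_entries_ne_zero _ B
      (by rw [eval_det_mul_genericPencil_mul A B P Q, hPQ, det_one]; exact one_ne_zero)
    rw [eval_det_mul_genericPencil_mul] at hne
    calc _ ≤ (∑ i, A i ⊗ₖ B' i).rank := le_rank_of_det_mul_mul_ne_zero hne
      _ = _ := hrank B' hB'
      _ ≤ p.totalDegree := natDegree_lineEval_zero_le _ _
end
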